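/- arXiv:2512.22033 — 8 statements merged into one kernel-verified Lean document; each statement's English description precedes it below -/
import Mathlib

section
/- Let G be a connected graph with at least 2 vertices and let S be a self-identifying code of G. Then every vertex v of G satisfies |N(v) ∩ S| ≥ 2, where N(v) is the open neighborhood of v. -/
open SimpleGraph Set

/-- Closed neighborhood of a vertex. -/
def cNbr {V : Type*} (G : SimpleGraph V) (v : V) : Set V := insert v (G.neighborSet v)

/-- `S` is a self-identifying code of `G`. -/
def IsSID {V : Type*} (G : SimpleGraph V) (S : Set V) : Prop :=
  S.Nonempty ∧ ∀ v : V, (cNbr G v ∩ S).Nonempty ∧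
    (⋂ c ∈ cNbr G v ∩ S, cNbr G c) = {v}

/-- Minimum cardinality of a self-identifying code. -/
noncomputable def gammaSID {V : Type*} (G : SimpleGraph V) : ℕ :=
  sInf {k | ∃ S : Set V, IsSID G S ∧ S.ncard = k}

/-- Direct product of the complete graph `K_m` with the path `P_n`. -/
def KmPn (m n : ℕ) : SimpleGraph (Fin m × Fin n) where
  Adj u w := u.1 ≠ w.1 ∧ ((u.2 : ℕ) + 1 = (w.2 : ℕ) ∨ (w.2 : ℕ) + 1 = (u.2 : ℕ))
  symm := ⟨fun u w h => ⟨h.1.symm, h.2.symm⟩⟩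
  loopless := ⟨fun u h => h.1 rfl⟩

/-- Direct product of the complete graph `K_m` with the cycle `C_n`. -/
def KmCn (m n : ℕ) : SimpleGraph (Fin m × ZMod n) where
  Adj u w := u.1 ≠ w.1 ∧ (u.2 + 1 = w.2 ∨ w.2 + 1 = u.2)
  symm := ⟨fun u w h => ⟨h.1.symm, h.2.symm⟩⟩
  loopless := ⟨fun u h => h.1 rfl⟩

/-
A self-identifying code separates every vertex `v` from every other vertex `w`: some codeword
in `N[v]` misses `w`. If `N(v)` contains no codeword, the only codeword in `N[v]` is `v` itself,
which fails to separate `v` from any of its neighbours. If `N(v)` contains exactly one codeword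
`s`, then `s` lies in `N[v]` and in `N[s]`, so no codeword in `N[v]` separates `v` from `s`.
-/

section

variable {V : Type*} {G : SimpleGraph V} {S : Set V}

lemma IsSID.eq_of_forall_mem_cNbr (hS : IsSID G S) {v w : V}
    (hw : ∀ c ∈ cNbr G v ∩ S, w ∈ cNbr G c) : w = v := by
  have hmem : w ∈ ⋂ c ∈ cNbr G v ∩ S, cNbr G c := mem_iInter₂.mpr hw
  rwa [(hS.2 v).2] at hmem

lemma IsSID.neighborSet_inter_nonempty (hS : IsSID G S) {v x : V} (hx : G.Adj v x) :
    (G.neighborSet v ∩ S).Nonempty := by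
  by_contra hempty
  refine G.ne_of_adj hx (hS.eq_of_forall_mem_cNbr fun c ⟨hc, hcS⟩ => ?_).symm
  rcases hc with rfl | hc
  · exact mem_insert_of_mem _ hx
  · exact absurd ⟨c, hc, hcS⟩ hempty

lemma IsSID.neighborSet_inter_ne_singleton (hS : IsSID G S) (v s : V) :
    G.neighborSet v ∩ S ≠ {s} := by
  intro hs
  have hvs : G.Adj v s := (hs.symm.subset rfl).1
  refine G.ne_of_adj hvs (hS.eq_of_forall_mem_cNbr fun c ⟨hc, hcS⟩ => ?_).symm
  rcases hc with rfl | hc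
  · exact mem_insert_of_mem _ hvs
  · rw [show c = s from hs.subset ⟨hc, hcS⟩]
    exact mem_insert _ _

lemma IsSID.two_le_ncard_neighborSet_inter [Finite V] (hS : IsSID G S) {v x : V}
    (hx : G.Adj v x) :
    2 ≤ (G.neighborSet v ∩ S).ncard := by
  have hpos : 0 < (G.neighborSet v ∩ S).ncard :=
    (ncard_pos (toFinite _)).mpr (hS.neighborSet_inter_nonempty hx)
  have hone : (G.neighborSet v ∩ S).ncard ≠ 1 := fun h =>
    let ⟨s, hs⟩ := ncard_eq_one.mp h
    hS.neighborSet_inter_ne_singleton v s hs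
  omega

end

theorem stmt0 {V : Type*} [Fintype V] (G : SimpleGraph V) (hconn : G.Connected)
    (hcard : 2 ≤ Fintype.card V) (S : Set V) (hS : IsSID G S) (v : V) :
    2 ≤ (G.neighborSet v ∩ S).ncard := by
  have : Nontrivial V := Fintype.one_lt_card_iff_nontrivial.mp hcard
  obtain ⟨x, hx⟩ := hconn.preconnected.exists_adj_of_nontrivial v
  exact hS.two_le_ncard_neighborSet_inter hx
end

section
/- A nonempty subset S of the vertices of a graph G is a self-identifying code if and only if for every pair of distinct vertices u, v of G, the set (N[u] ∩ S) \ N[v] is nonempty. -/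
open SimpleGraph Set

section ClosedNeighborhood

variable {V : Type*} (G : SimpleGraph V)

theorem mem_cNbr_comm {u v : V} : u ∈ cNbr G v ↔ v ∈ cNbr G u := by
  simp only [cNbr, mem_insert_iff, mem_neighborSet, eq_comm, G.adj_comm]

theorem mem_biInter_cNbr_iff {S : Set V} {v x : V} :
    x ∈ ⋂ c ∈ cNbr G v ∩ S, cNbr G c ↔ cNbr G v ∩ S ⊆ cNbr G x := by
  simp only [mem_iInter₂, mem_cNbr_comm G (u := x)]
  rfl

theorem biInter_cNbr_eq_singleton_iff {S : Set V} {v : V} :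
    (⋂ c ∈ cNbr G v ∩ S, cNbr G c) = {v} ↔
      ∀ x, x ≠ v → ((cNbr G v ∩ S) \ cNbr G x).Nonempty := by
  have hv : v ∈ ⋂ c ∈ cNbr G v ∩ S, cNbr G c :=
    (mem_biInter_cNbr_iff G).2 inter_subset_left
  simp only [eq_singleton_iff_unique_mem, hv, true_and, mem_biInter_cNbr_iff,
    sdiff_nonempty]
  exact forall_congr' fun _ => not_imp_not.symm

theorem cNbr_inter_nonempty {S : Set V} (hS : S.Nonempty)
    (hsep : ∀ u v : V, u ≠ v → ((cNbr G u ∩ S) \ cNbr G v).Nonempty) (v : V) :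
    (cNbr G v ∩ S).Nonempty := by
  by_cases hv : ∃ x, x ≠ v
  · obtain ⟨x, hx⟩ := hv
    exact (hsep v x hx.symm).mono sdiff_subset
  · push Not at hv
    obtain ⟨s, hs⟩ := hS
    exact ⟨v, mem_insert v _, hv s ▸ hs⟩

end ClosedNeighborhood

theorem stmt1 {V : Type*} (G : SimpleGraph V) (S : Set V) (hS : S.Nonempty) :
    IsSID G S ↔ ∀ u v : V, u ≠ v → ((cNbr G u ∩ S) \ cNbr G v).Nonempty := by
  simp only [IsSID, biInter_cNbr_eq_singleton_iff, hS, true_and]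
  constructor
  · exact fun h u v huv => (h u).2 v huv.symm
  · exact fun h v => ⟨cNbr_inter_nonempty G hS h v, fun x hx => h v x hx.symm⟩
end

section
/- If a graph G contains a vertex of degree one (a leaf), then G admits no self-identifying code. In particular, paths P_n admit no self-identifying code. -/
open SimpleGraph Set

lemma cNbr_eq_pair_of_existsUnique_adj {V : Type*} {G : SimpleGraph V} {v u : V}
    (hu : G.Adj v u) (huniq : ∀ w, G.Adj v w → w = u) : cNbr G v = {v, u} := by
  ext w
  simp only [cNbr, mem_insert_iff, mem_neighborSet, mem_singleton_iff]
  exact or_congr_right ⟨huniq w, fun h => h ▸ hu⟩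

/-- Both vertices of `N[v] = {v, u}` lie in `N[u]`, so the intersection identifying `v`
also contains `u`. -/
theorem not_isSID_of_existsUnique_adj {V : Type*} {G : SimpleGraph V} {v : V}
    (hv : ∃! u, G.Adj v u) (S : Set V) : ¬ IsSID G S := by
  rintro ⟨-, hS⟩
  obtain ⟨u, hu, huniq⟩ := hv
  have hmem : u ∈ ⋂ c ∈ cNbr G v ∩ S, cNbr G c := by
    refine mem_iInter₂.2 fun c hc => ?_
    rw [cNbr_eq_pair_of_existsUnique_adj hu huniq] at hc
    rcases hc.1 with rfl | rfl
    · exact mem_insert_of_mem _ hu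
    · exact mem_insert _ _
  rw [(hS v).2, mem_singleton_iff] at hmem
  exact G.irrefl (hmem ▸ hu)

lemma pathGraph_existsUnique_adj_zero {n : ℕ} (hn : 2 ≤ n) :
    ∃! w : Fin n, (pathGraph n).Adj ⟨0, by omega⟩ w := by
  refine ⟨⟨1, hn⟩, by simp [pathGraph_adj], fun w hw => ?_⟩
  simp only [pathGraph_adj, zero_add, Nat.add_eq_zero_iff, one_ne_zero, and_false,
    or_false] at hw
  exact Fin.ext hw.symm

theorem stmt4 :
    (∀ (V : Type*) [Fintype V] (G : SimpleGraph V) [DecidableRel G.Adj],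
        (∃ v : V, G.degree v = 1) → ¬ ∃ S : Set V, IsSID G S) ∧
      (∀ n : ℕ, 2 ≤ n → ¬ ∃ S : Set (Fin n), IsSID (SimpleGraph.pathGraph n) S) := by
  refine ⟨fun V _ G _ ⟨v, hv⟩ ⟨S, hS⟩ => ?_, fun n hn ⟨S, hS⟩ => ?_⟩
  · exact not_isSID_of_existsUnique_adj (degree_eq_one_iff_existsUnique_adj.1 hv) S hS
  · exact not_isSID_of_existsUnique_adj (pathGraph_existsUnique_adj_zero hn) S hS
end

section
/- Let m, n ≥ 3 and let S be a self-identifying code of K_m × P_n. Then the first column C_0 = {(v_i, 0) : 0 ≤ i ≤ m−1} and the last column C_{n−1} = {(v_i, n−1) : 0 ≤ i ≤ m−1} are both entirely contained in S. -/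
open SimpleGraph Set

theorem IsSID.mem_of_neighborSet_subset {V : Type*} {G : SimpleGraph V} {S : Set V}
    (hS : IsSID G S) {v w : V} (hvw : v ≠ w) (hN : G.neighborSet v ⊆ G.neighborSet w) :
    v ∈ S := by
  by_contra hv
  have hw : w ∈ ⋂ c ∈ cNbr G v ∩ S, cNbr G c := by
    refine mem_iInter₂.mpr fun c ⟨hc, hcS⟩ => ?_
    rcases hc with rfl | hvc
    · exact absurd hcS hv
    · exact mem_insert_of_mem c (hN hvc).symm
  rw [(hS.2 v).2] at hw
  exact hvw hw.symm

theorem KmPn_neighborSet_subset {m n : ℕ} (i : Fin m) {j k : Fin n}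
    (h : ∀ l < n, (j : ℕ) + 1 = l ∨ l + 1 = j → (k : ℕ) + 1 = l ∨ l + 1 = k) :
    (KmPn m n).neighborSet (i, j) ⊆ (KmPn m n).neighborSet (i, k) :=
  fun l ⟨hne, hjl⟩ => ⟨hne, h _ l.2.2 hjl⟩

theorem stmt7 (m n : ℕ) (hn : 3 ≤ n) (S : Set (Fin m × Fin n))
    (hS : IsSID (KmPn m n) S) (i : Fin m) :
    (i, (⟨0, by omega⟩ : Fin n)) ∈ S ∧ (i, (⟨n - 1, by omega⟩ : Fin n)) ∈ S := by
  constructor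
  · refine hS.mem_of_neighborSet_subset (w := (i, ⟨2, by omega⟩)) ?_ ?_
    · simp [Fin.ext_iff]
    · exact KmPn_neighborSet_subset i fun l hl => by dsimp only; omega
  · refine hS.mem_of_neighborSet_subset (w := (i, ⟨n - 3, by omega⟩)) ?_ ?_
    · simp [Fin.ext_iff]; omega
    · exact KmPn_neighborSet_subset i fun l hl => by dsimp only; omega
end

section
/- Let m, n ≥ 3 and let S be a self-identifying code of K_m × P_n. Then |C_1 ∩ S| ≥ 3 and |C_{n−2} ∩ S| ≥ 3, where C_j denotes the j-th column {(v_i, j) : 0 ≤ i ≤ m−1}. -/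
open SimpleGraph Set

/-
In a self-identifying code every non-isolated vertex v has two code neighbours:
if all code neighbours of v lay in {a} for some neighbour a of v, then a would lie in
N[c] for every code vertex c ∈ N[v], so the intersection would not be {v}.
A vertex (i, 0) of the end column sees exactly the vertices of column 1 outside row i.
Applied at (0, 0) this gives two code vertices a ≠ b in column 1; applied at (a.1, 0),
whose neighbourhood misses a, it gives a code vertex of column 1 other than a and b.
-/

namespace IsSID

variable {V : Type*} {G : SimpleGraph V} {S : Set V} {v a : V}

lemma neighborSet_inter_not_subset_singleton (hS : IsSID G S) (hva : G.Adj v a) :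
    ¬ G.neighborSet v ∩ S ⊆ {a} := by
  intro hsub
  have ha : a ∈ ⋂ c ∈ cNbr G v ∩ S, cNbr G c := by
    simp only [mem_iInter₂]
    rintro c ⟨rfl | hvc, hcS⟩
    · exact mem_insert_of_mem _ hva
    · rw [hsub ⟨hvc, hcS⟩]
      exact mem_insert a _
  rw [(hS.2 v).2] at ha
  exact hva.ne ha.symm

lemma one_lt_encard_neighborSet_inter (hS : IsSID G S) (hva : G.Adj v a) :
    1 < (G.neighborSet v ∩ S).encard := by
  obtain ⟨b, hb, hba⟩ := not_subset.1 (hS.neighborSet_inter_not_subset_singleton hva)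
  obtain ⟨c, hc, hcb⟩ := not_subset.1 (hS.neighborSet_inter_not_subset_singleton hb.1)
  exact one_lt_encard_iff.2 ⟨b, c, hb, hc, Ne.symm hcb⟩

end IsSID

lemma IsSID.three_le_ncard_column {α β : Type*} [Finite α] [Finite β] [Nontrivial α]
    {G : SimpleGraph (α × β)} {S : Set (α × β)} (hS : IsSID G S) {j₀ j₁ : β}
    (hG : ∀ i w, G.Adj (i, j₀) w ↔ w.1 ≠ i ∧ w.2 = j₁) :
    3 ≤ ({p : α × β | p.2 = j₁} ∩ S).ncard := by
  have hcol : ∀ {i w}, w ∈ G.neighborSet (i, j₀) ∩ S →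
      w.1 ≠ i ∧ w ∈ {p : α × β | p.2 = j₁} ∩ S :=
    fun ⟨hw, hwS⟩ => have h := (hG _ _).1 hw; ⟨h.1, h.2, hwS⟩
  obtain ⟨i₀, i₁, hi⟩ := exists_pair_ne α
  obtain ⟨a, b, ha, hb, hab⟩ := one_lt_encard_iff.1
    (hS.one_lt_encard_neighborSet_inter ((hG i₀ (i₁, j₁)).2 ⟨hi.symm, rfl⟩))
  have ha' := (hcol ha).2
  have hb' := (hcol hb).2
  have hba : b.1 ≠ a.1 := fun h => hab (Prod.ext h.symm (hb'.1.trans ha'.1.symm).symm)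
  obtain ⟨c, hc, hcb⟩ := not_subset.1
    (hS.neighborSet_inter_not_subset_singleton ((hG a.1 b).2 ⟨hba, hb'.1⟩))
  have hca : c ≠ a := fun h => (hcol hc).1 (congrArg Prod.fst h)
  exact (two_lt_ncard).2 ⟨a, ha', b, hb', c, (hcol hc).2, hab, hca.symm, Ne.symm hcb⟩

lemma KmPn.adj_iff_of_end {m n : ℕ} {j₀ j₁ : Fin n}
    (hj : ∀ j : Fin n, (j₀ : ℕ) + 1 = j ∨ (j : ℕ) + 1 = j₀ ↔ j = j₁) (i : Fin m)
    (w : Fin m × Fin n) : (KmPn m n).Adj (i, j₀) w ↔ w.1 ≠ i ∧ w.2 = j₁ := by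
  simp only [KmPn, hj, ne_comm]

theorem stmt8 (m n : ℕ) (hm : 3 ≤ m) (hn : 3 ≤ n) (S : Set (Fin m × Fin n))
    (hS : IsSID (KmPn m n) S) :
    3 ≤ ({p : Fin m × Fin n | p.2 = (⟨1, by omega⟩ : Fin n)} ∩ S).ncard ∧
      3 ≤ ({p : Fin m × Fin n | p.2 = (⟨n - 2, by omega⟩ : Fin n)} ∩ S).ncard := by
  have : Nontrivial (Fin m) := Fin.nontrivial_iff_two_le.2 (by omega)
  constructor
  · refine hS.three_le_ncard_column (j₀ := ⟨0, by omega⟩) (KmPn.adj_iff_of_end fun j => ?_)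
    simp only [Fin.ext_iff]
    omega
  · refine hS.three_le_ncard_column (j₀ := ⟨n - 1, by omega⟩) (KmPn.adj_iff_of_end fun j => ?_)
    simp only [Fin.ext_iff]
    omega
end

section
/- Let m ≥ 3, n ≥ 5, let S be a self-identifying code of K_m × P_n, and suppose (v_i, j) ∉ S for some 2 ≤ j ≤ n−3. Then for every row index i' ≠ i, at least one of (v_{i'}, j−1), (v_{i'}, j+1) lies in S; consequently |N[(v_i, j)] ∩ S| ≥ m − 1. -/
open SimpleGraph Set

open SimpleGraph Set

/-
If `v ∉ S`, every codeword in `N[v]` is a genuine neighbour `(k, j ± 1)` with `k ≠ i`. Such a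
codeword also dominates `(i', j)` unless `k = i'`. So if row `i'` had no codeword at `j - 1` or
`j + 1`, the vertex `(i', j)` would lie in the intersection of the closed neighbourhoods of the
codewords around `v`, which a self-identifying code forbids. Projecting those codewords to their
rows then hits every row other than `i`, giving at least `m - 1` of them.
-/

theorem mem_cNbr_iff {V : Type*} {G : SimpleGraph V} {v w : V} :
    w ∈ cNbr G v ↔ w = v ∨ G.Adj v w :=
  Iff.rfl

theorem IsSID.exists_mem_notMem_cNbr {V : Type*} {G : SimpleGraph V} {S : Set V}
    (hS : IsSID G S) {v w : V} (hwv : w ≠ v) : ∃ c ∈ cNbr G v ∩ S, w ∉ cNbr G c := by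
  by_contra! h
  have hw : w ∈ ⋂ c ∈ cNbr G v ∩ S, cNbr G c := mem_iInter₂.2 h
  rw [(hS.2 v).2] at hw
  exact hwv hw

namespace KmPn

variable {m n : ℕ} {S : Set (Fin m × Fin n)} {i : Fin m} {x a b : Fin n}

theorem adj_iff {u w : Fin m × Fin n} :
    (KmPn m n).Adj u w ↔ u.1 ≠ w.1 ∧ ((u.2 : ℕ) + 1 = w.2 ∨ (w.2 : ℕ) + 1 = u.2) :=
  Iff.rfl

theorem mem_or_mem_of_notMem (hS : IsSID (KmPn m n) S) (ha : (a : ℕ) + 1 = x)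
    (hb : (x : ℕ) + 1 = b) (hv : (i, x) ∉ S) {i' : Fin m} (hi' : i' ≠ i) :
    (i', a) ∈ S ∨ (i', b) ∈ S := by
  obtain ⟨⟨k, y⟩, ⟨hcv, hcS⟩, hwc⟩ := hS.exists_mem_notMem_cNbr (v := (i, x)) (w := (i', x))
    (by simpa using hi')
  have hxy : (x : ℕ) + 1 = y ∨ (y : ℕ) + 1 = x := by
    rcases mem_cNbr_iff.1 hcv with hcv | hadj
    · exact absurd (hcv ▸ hcS) hv
    · exact (adj_iff.1 hadj).2
  obtain rfl : k = i' := by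
    by_contra hne
    exact hwc (mem_cNbr_iff.2 (Or.inr (adj_iff.2 ⟨hne, hxy.symm⟩)))
  rcases hxy with hy | hy
  · right
    rwa [show b = y from Fin.ext (by omega)]
  · left
    rwa [show a = y from Fin.ext (by omega)]

theorem sub_one_le_ncard_cNbr_inter (ha : (a : ℕ) + 1 = x) (hb : (x : ℕ) + 1 = b)
    (hrows : ∀ i' ≠ i, (i', a) ∈ S ∨ (i', b) ∈ S) :
    m - 1 ≤ (cNbr (KmPn m n) (i, x) ∩ S).ncard := by
  have hcover : ({i}ᶜ : Set (Fin m)) ⊆ Prod.fst '' (cNbr (KmPn m n) (i, x) ∩ S) := by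
    intro i' hi'
    have hne : i ≠ i' := Ne.symm hi'
    rcases hrows i' hi' with h | h
    · exact ⟨(i', a), ⟨Or.inr (adj_iff.2 ⟨hne, Or.inr ha⟩), h⟩, rfl⟩
    · exact ⟨(i', b), ⟨Or.inr (adj_iff.2 ⟨hne, Or.inl hb⟩), h⟩, rfl⟩
  calc m - 1 = ({i}ᶜ : Set (Fin m)).ncard := by
        rw [ncard_compl, ncard_singleton, Nat.card_eq_fintype_card, Fintype.card_fin]
    _ ≤ (Prod.fst '' (cNbr (KmPn m n) (i, x) ∩ S)).ncard := ncard_le_ncard hcover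
    _ ≤ (cNbr (KmPn m n) (i, x) ∩ S).ncard := ncard_image_le

end KmPn

theorem stmt9 (m n : ℕ) (S : Set (Fin m × Fin n))
    (hS : IsSID (KmPn m n) S) (i : Fin m) (j : ℕ) (hj1 : 2 ≤ j) (hj2 : j ≤ n - 3)
    (hv : (i, (⟨j, by omega⟩ : Fin n)) ∉ S) :
    (∀ i' : Fin m, i' ≠ i →
        (i', (⟨j - 1, by omega⟩ : Fin n)) ∈ S ∨ (i', (⟨j + 1, by omega⟩ : Fin n)) ∈ S) ∧
      m - 1 ≤ (cNbr (KmPn m n) (i, (⟨j, by omega⟩ : Fin n)) ∩ S).ncard := by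
  have ha : j - 1 + 1 = j := by omega
  have hrows := fun i' => KmPn.mem_or_mem_of_notMem (i' := i') (a := ⟨j - 1, by omega⟩)
    (b := ⟨j + 1, by omega⟩) hS ha rfl hv
  exact ⟨hrows, KmPn.sub_one_le_ncard_cNbr_inter ha rfl hrows⟩
end

section
/- Let m ≥ 3, n ≥ 7, let S be a self-identifying code of K_m × P_n, and suppose some internal column C_j with 3 ≤ j ≤ n−4 satisfies C_j ∩ S = ∅. Then both adjacent columns are entirely contained in S: C_{j−1} ∪ C_{j+1} ⊆ S. -/
open SimpleGraph Set

/-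
If `p` lies in column `j - 1` but not in `S`, then every codeword in `N[p]` lies in column `j - 2`,
because column `j` contains none. All of these codewords are also adjacent to the vertex of column
`j - 3` in the row of `p`, so the intersection of their closed neighbourhoods is not `{p}`. The case
of column `j + 1` is symmetric, with column `j + 3`.
-/

namespace IsSID

variable {V : Type*} {G : SimpleGraph V} {S : Set V}

theorem eq_of_forall_mem_cNbr_s11 (hS : IsSID G S) {u v : V}
    (h : ∀ c ∈ cNbr G v ∩ S, u ∈ cNbr G c) : u = v := by
  have hu : u ∈ ⋂ c ∈ cNbr G v ∩ S, cNbr G c := mem_iInter₂.mpr h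
  rwa [(hS.2 v).2, mem_singleton_iff] at hu

theorem eq_of_forall_adj (hS : IsSID G S) {u v : V} (hv : v ∉ S)
    (h : ∀ c ∈ S, G.Adj v c → G.Adj c u) : u = v := by
  refine hS.eq_of_forall_mem_cNbr_s11 fun c ⟨hcv, hcS⟩ => ?_
  rcases mem_insert_iff.mp hcv with rfl | hadj
  · exact absurd hcS hv
  · exact mem_insert_of_mem _ (h c hcS hadj)

end IsSID

theorem KmPn.mem_of_forall_adj_near {m n : ℕ} {S : Set (Fin m × Fin n)}
    (hS : IsSID (KmPn m n) S) {p : Fin m × Fin n} {k : ℕ} (hkn : k < n) (hkp : k ≠ p.2)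
    (hnear : ∀ c ∈ S, (KmPn m n).Adj p c → (c.2 : ℕ) + 1 = k ∨ k + 1 = c.2) :
    p ∈ S := by
  by_contra hp
  have hkp' : ((p.1, ⟨k, hkn⟩) : Fin m × Fin n) = p :=
    hS.eq_of_forall_adj hp fun c hcS hpc => ⟨fun h => hpc.1 h.symm, hnear c hcS hpc⟩
  exact hkp (congrArg (Fin.val ∘ Prod.snd) hkp')

theorem stmt11 (m n : ℕ) (S : Set (Fin m × Fin n))
    (hS : IsSID (KmPn m n) S) (j : ℕ) (hj1 : 3 ≤ j) (hj2 : j ≤ n - 4)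
    (hempty : {p : Fin m × Fin n | p.2 = (⟨j, by omega⟩ : Fin n)} ∩ S = ∅) :
    {p : Fin m × Fin n | p.2 = (⟨j - 1, by omega⟩ : Fin n)} ∪
        {p : Fin m × Fin n | p.2 = (⟨j + 1, by omega⟩ : Fin n)} ⊆ S := by
  have hcol : ∀ c ∈ S, (c.2 : ℕ) ≠ j := fun c hcS hc =>
    (eq_empty_iff_forall_notMem.mp hempty) c ⟨Fin.ext hc, hcS⟩
  rintro p (hp | hp) <;> simp only [mem_ofPred_eq, Fin.ext_iff, Fin.val_mk] at hp
  · exact KmPn.mem_of_forall_adj_near hS (k := j - 3) (by omega) (by omega)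
      fun c hcS hpc => by have := hpc.2; have := hcol c hcS; omega
  · exact KmPn.mem_of_forall_adj_near hS (k := j + 3) (by omega) (by omega)
      fun c hcS hpc => by have := hpc.2; have := hcol c hcS; omega
end

section
/- For every ε > 0 there exist M, N such that for all m ≥ M and n ≥ N, |γ^SID(K_m × C_n)/(m n) − 1/3| < ε. -/
open SimpleGraph Set

lemma mem_cNbr {m n : ℕ} (u v : Fin m × ZMod n) :
    u ∈ cNbr (KmCn m n) v ↔ u = v ∨ (u.1 ≠ v.1 ∧ (v.2 + 1 = u.2 ∨ u.2 + 1 = v.2)) := by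
  simp [cNbr, KmCn, SimpleGraph.neighborSet, ne_comm, or_comm, and_comm]

lemma cNbr_comm {V : Type*} (G : SimpleGraph V) (u v : V) :
    u ∈ cNbr G v ↔ v ∈ cNbr G u := by
  simp [cNbr, SimpleGraph.neighborSet, G.adj_comm, eq_comm]

lemma rows_exist {m : ℕ} (hm : 3 ≤ m) (i : Fin m) :
    ∃ a b : Fin m, a.val < 3 ∧ b.val < 3 ∧ a ≠ b ∧ a ≠ i ∧ b ≠ i := by
  rcases Nat.lt_or_ge i.val 1 with h | h
  · exact ⟨⟨1, by omega⟩, ⟨2, by omega⟩, by simp, by simp,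
      by simp [Fin.ext_iff], by simp [Fin.ext_iff]; omega, by simp [Fin.ext_iff]; omega⟩
  rcases Nat.lt_or_ge i.val 2 with h2 | h2
  · exact ⟨⟨0, by omega⟩, ⟨2, by omega⟩, by simp, by simp,
      by simp [Fin.ext_iff], by simp [Fin.ext_iff]; omega, by simp [Fin.ext_iff]; omega⟩
  · exact ⟨⟨0, by omega⟩, ⟨1, by omega⟩, by simp, by simp,
      by simp [Fin.ext_iff], by simp [Fin.ext_iff]; omega, by simp [Fin.ext_iff]; omega⟩

lemma zmod_cast_ne_zero {n : ℕ} (k : ℕ) (h0 : 0 < k) (hk : k < n) : ((k:ℕ) : ZMod n) ≠ 0 := by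
  haveI : NeZero n := ⟨by omega⟩
  rw [Ne, ZMod.natCast_eq_zero_iff]
  intro h; exact absurd (Nat.le_of_dvd h0 h) (by omega)

lemma col_next {n : ℕ} (hn : 5 ≤ n) (j : ZMod n) (h : j.val % 3 = 2) : (j + 1).val % 3 = 0 := by
  haveI : NeZero n := ⟨by omega⟩
  have hv : (j + 1).val = (j.val + (1 : ZMod n).val) % n := ZMod.val_add j 1
  rw [ZMod.val_one_eq_one_mod, Nat.mod_eq_of_lt (show (1:ℕ) < n by omega)] at hv
  have hlt : j.val < n := ZMod.val_lt j
  rcases Nat.lt_or_ge (j.val + 1) n with h1 | h1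
  · rw [Nat.mod_eq_of_lt h1] at hv; omega
  · have h2 : j.val + 1 = n := by omega
    rw [h2, Nat.mod_self] at hv; omega

lemma col_prev {n : ℕ} (hn : 5 ≤ n) (j : ZMod n) (h : j.val % 3 = 1) :
    ∃ p : ZMod n, p + 1 = j ∧ p.val % 3 = 0 := by
  haveI : NeZero n := ⟨by omega⟩
  have hlt : j.val < n := ZMod.val_lt j
  refine ⟨((j.val - 1 : ℕ) : ZMod n), ?_, ?_⟩
  · have h1 : ((j.val - 1 : ℕ) : ZMod n) + 1 = ((j.val - 1 + 1 : ℕ) : ZMod n) := by push_cast; ring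
    rw [h1, show j.val - 1 + 1 = j.val by omega, ZMod.natCast_zmod_val]
  · rw [ZMod.val_cast_of_lt (by omega)]; omega

def S0 (m n : ℕ) : Set (Fin m × ZMod n) := {v | v.2.val % 3 = 0 ∨ v.1.val < 3}

lemma isSID_S0 {m n : ℕ} (hm : 3 ≤ m) (hn : 5 ≤ n) : IsSID (KmCn m n) (S0 m n) := by
  haveI : NeZero n := ⟨by omega⟩
  have contra : ∀ (k : ℕ), 0 < k → k < n → ∀ x : ZMod n, x + (k : ℕ) = x → False := by
    intro k hk0 hkn x heq
    exact zmod_cast_ne_zero k hk0 hkn (by linear_combination heq)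
  refine ⟨⟨(⟨0, by omega⟩, 0), Or.inr (by simp)⟩, ?_⟩
  rintro ⟨i, j⟩
  obtain ⟨a, b, ha3, hb3, hab, hai, hbi⟩ := rows_exist hm i
  have hmemSa : ∀ y : ZMod n, (a, y) ∈ S0 m n := fun y => Or.inr ha3
  have hmemSb : ∀ y : ZMod n, (b, y) ∈ S0 m n := fun y => Or.inr hb3
  constructor
  · exact ⟨(a, j+1), (mem_cNbr _ _).2 (Or.inr ⟨hai, Or.inl rfl⟩), hmemSa _⟩
  rw [Set.eq_singleton_iff_unique_mem]
  constructor
  · simp only [Set.mem_iInter, Set.mem_inter_iff, and_imp]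
    intro c hc _
    exact (cNbr_comm _ c _).1 hc
  rintro ⟨x, y⟩ hu
  simp only [Set.mem_iInter, Set.mem_inter_iff, and_imp] at hu
  obtain ⟨p, hpj⟩ : ∃ p : ZMod n, p + 1 = j := ⟨j - 1, sub_add_cancel j 1⟩
  rcases (show j.val % 3 = 0 ∨ j.val % 3 = 1 ∨ j.val % 3 = 2 by omega) with hj | hj | hj
  · -- Case 1 : column j is fully in the code
    have hu1 := hu (a, j+1) ((mem_cNbr _ _).2 (Or.inr ⟨hai, Or.inl rfl⟩)) (hmemSa _)
    have hu2 := hu (b, j+1) ((mem_cNbr _ _).2 (Or.inr ⟨hbi, Or.inl rfl⟩)) (hmemSb _)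
    have hu3 := hu (a, p) ((mem_cNbr _ _).2 (Or.inr ⟨hai, Or.inr hpj⟩)) (hmemSa _)
    have huv := hu (i, j) ((mem_cNbr _ _).2 (Or.inl rfl)) (Or.inl hj)
    rw [mem_cNbr] at hu1 hu2 hu3 huv
    simp only [Prod.mk.injEq] at hu1 hu2 hu3 huv
    have hua : ¬(x = a ∧ y = j + 1) := by
      rintro ⟨rfl, rfl⟩
      rcases hu2 with ⟨heq, -⟩ | ⟨-, h2 | h2⟩
      · exact hab heq
      · exact contra 1 one_pos (by omega) (j+1) (by push_cast; linear_combination h2)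
      · exact contra 1 one_pos (by omega) (j+1) (by push_cast; linear_combination h2)
    rcases hu1 with heq | ⟨hxa, hy1⟩
    · exact absurd heq hua
    have hy3 : p + 1 = y ∨ y + 1 = p := by
      rcases hu3 with ⟨heq, -⟩ | ⟨-, h3⟩
      · exact absurd heq hxa
      · exact h3
    have hyj : y = j := by
      rcases hy1 with h1 | h1 <;> rcases hy3 with h3 | h3
      · exact (contra 2 (by omega) (by omega) j (by push_cast; linear_combination h1 - h3 + hpj)).elim
      · exact (contra 4 (by omega) (by omega) j (by push_cast; linear_combination h1 + h3 + hpj)).elim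
      · linear_combination h1
      · linear_combination h1
    rcases huv with ⟨hxi, -⟩ | ⟨-, h | h⟩
    · simp only [Prod.mk.injEq]; exact ⟨hxi, hyj⟩
    · exact (contra 1 one_pos (by omega) y (by push_cast; linear_combination h + hyj)).elim
    · exact (contra 1 one_pos (by omega) y (by push_cast; linear_combination h - hyj)).elim
  · -- Case 3 : column p = j - 1 is fully in the code
    obtain ⟨q, hqj, hq0⟩ := col_prev hn j hj
    have hu1 := hu (a, q) ((mem_cNbr _ _).2 (Or.inr ⟨hai, Or.inr hqj⟩)) (hmemSa _)
    have hu2 := hu (b, q) ((mem_cNbr _ _).2 (Or.inr ⟨hbi, Or.inr hqj⟩)) (hmemSb _)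
    have hu6 := hu (a, j+1) ((mem_cNbr _ _).2 (Or.inr ⟨hai, Or.inl rfl⟩)) (hmemSa _)
    rw [mem_cNbr] at hu1 hu2 hu6
    simp only [Prod.mk.injEq] at hu1 hu2 hu6
    have hua : ¬(x = a ∧ y = q) := by
      rintro ⟨rfl, rfl⟩
      rcases hu2 with ⟨heq, -⟩ | ⟨-, h2 | h2⟩
      · exact hab heq
      · exact contra 1 one_pos (by omega) y (by push_cast; linear_combination h2)
      · exact contra 1 one_pos (by omega) y (by push_cast; linear_combination h2)
    rcases hu1 with heq | ⟨hxa, hy1⟩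
    · exact absurd heq hua
    have hxi : x = i := by
      by_contra hxi
      have h := hu (x, q) ((mem_cNbr _ _).2 (Or.inr ⟨hxi, Or.inr hqj⟩)) (Or.inl hq0)
      rw [mem_cNbr] at h
      simp only [Prod.mk.injEq] at h
      rcases h with ⟨-, rfl⟩ | ⟨hxx, -⟩
      · rcases hy1 with h1 | h1
        · exact contra 1 one_pos (by omega) y (by push_cast; linear_combination h1)
        · exact contra 1 one_pos (by omega) y (by push_cast; linear_combination h1)
      · exact hxx rfl
    have hy6 : j + 1 + 1 = y ∨ y + 1 = j + 1 := by
      rcases hu6 with ⟨heq1, -⟩ | ⟨-, h6⟩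
      · exact (hai (heq1.symm.trans hxi)).elim
      · exact h6
    have hyj : y = j := by
      rcases hy1 with h1 | h1 <;> rcases hy6 with h6 | h6
      · exact (contra 2 (by omega) (by omega) j (by push_cast; linear_combination h6 - h1 + hqj)).elim
      · linear_combination hqj - h1
      · exact (contra 4 (by omega) (by omega) j (by push_cast; linear_combination h1 + h6 + hqj)).elim
      · linear_combination h6
    simp only [Prod.mk.injEq]; exact ⟨hxi, hyj⟩
  · -- Case 2 : column j + 1 is fully in the code
    have hq0 := col_next hn j hj
    have hu1 := hu (a, j+1) ((mem_cNbr _ _).2 (Or.inr ⟨hai, Or.inl rfl⟩)) (hmemSa _)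
    have hu2 := hu (b, j+1) ((mem_cNbr _ _).2 (Or.inr ⟨hbi, Or.inl rfl⟩)) (hmemSb _)
    have hu3 := hu (a, p) ((mem_cNbr _ _).2 (Or.inr ⟨hai, Or.inr hpj⟩)) (hmemSa _)
    rw [mem_cNbr] at hu1 hu2 hu3
    simp only [Prod.mk.injEq] at hu1 hu2 hu3
    have hua : ¬(x = a ∧ y = j + 1) := by
      rintro ⟨rfl, rfl⟩
      rcases hu2 with ⟨heq, -⟩ | ⟨-, h2 | h2⟩
      · exact hab heq
      · exact contra 1 one_pos (by omega) (j+1) (by push_cast; linear_combination h2)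
      · exact contra 1 one_pos (by omega) (j+1) (by push_cast; linear_combination h2)
    rcases hu1 with heq | ⟨hxa, hy1⟩
    · exact absurd heq hua
    have hxi : x = i := by
      by_contra hxi
      have h := hu (x, j+1) ((mem_cNbr _ _).2 (Or.inr ⟨hxi, Or.inl rfl⟩)) (Or.inl hq0)
      rw [mem_cNbr] at h
      simp only [Prod.mk.injEq] at h
      rcases h with ⟨-, rfl⟩ | ⟨hxx, -⟩
      · rcases hy1 with h1 | h1
        · exact contra 1 one_pos (by omega) (j+1) (by push_cast; linear_combination h1)
        · exact contra 1 one_pos (by omega) (j+1) (by push_cast; linear_combination h1)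
      · exact hxx rfl
    have hy3 : p + 1 = y ∨ y + 1 = p := by
      rcases hu3 with ⟨heq, -⟩ | ⟨-, h3⟩
      · exact absurd heq hxa
      · exact h3
    have hyj : y = j := by
      rcases hy1 with h1 | h1 <;> rcases hy3 with h3 | h3
      · exact (contra 2 (by omega) (by omega) j (by push_cast; linear_combination h1 - h3 + hpj)).elim
      · exact (contra 4 (by omega) (by omega) j (by push_cast; linear_combination h1 + h3 + hpj)).elim
      · linear_combination h1
      · linear_combination h1
    simp only [Prod.mk.injEq]; exact ⟨hxi, hyj⟩

lemma ncard_S0_le {m n : ℕ} (hn : 5 ≤ n) : (S0 m n).ncard ≤ m * ((n+2)/3) + 3 * n := by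
  haveI : NeZero n := ⟨by omega⟩
  have h0 : 0 < (n+2)/3 := by omega
  have hsplit : S0 m n = {v : Fin m × ZMod n | v.2.val % 3 = 0} ∪ {v | v.1.val < 3} := by
    ext v; simp [S0]
  have hA : ({v : Fin m × ZMod n | v.2.val % 3 = 0}).ncard ≤ m * ((n+2)/3) := by
    have hle := Set.ncard_le_ncard_of_injOn (s := {v : Fin m × ZMod n | v.2.val % 3 = 0})
      (t := (Set.univ : Set (Fin m × Fin ((n+2)/3))))
      (fun v : Fin m × ZMod n => ((v.1, ⟨v.2.val/3 % ((n+2)/3), Nat.mod_lt _ h0⟩) : Fin m × Fin ((n+2)/3)))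
      (fun a _ => Set.mem_univ _) ?_ (Set.finite_univ)
    · calc ({v : Fin m × ZMod n | v.2.val % 3 = 0}).ncard
          ≤ (Set.univ : Set (Fin m × Fin ((n+2)/3))).ncard := hle
        _ = m * ((n+2)/3) := by
            rw [Set.ncard_univ, Nat.card_eq_fintype_card, Fintype.card_prod, Fintype.card_fin,
              Fintype.card_fin]
    · rintro ⟨i, j⟩ hj ⟨i', j'⟩ hj' heq
      simp only [Set.mem_setOf_eq] at hj hj'
      simp only [Prod.mk.injEq, Fin.mk.injEq] at heq
      obtain ⟨h1, h2⟩ := heq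
      have hjlt : j.val < n := ZMod.val_lt j
      have hjlt' : j'.val < n := ZMod.val_lt j'
      rw [Nat.mod_eq_of_lt (by omega), Nat.mod_eq_of_lt (by omega)] at h2
      have : j.val = j'.val := by omega
      exact Prod.ext h1 (ZMod.val_injective n this)
  have hB : ({v : Fin m × ZMod n | v.1.val < 3}).ncard ≤ 3 * n := by
    have hle := Set.ncard_le_ncard_of_injOn (s := {v : Fin m × ZMod n | v.1.val < 3})
      (t := (Set.univ : Set (Fin 3 × ZMod n)))
      (fun v : Fin m × ZMod n => ((⟨v.1.val % 3, Nat.mod_lt _ (by omega)⟩, v.2) : Fin 3 × ZMod n))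
      (fun a _ => Set.mem_univ _) ?_ (Set.finite_univ)
    · calc ({v : Fin m × ZMod n | v.1.val < 3}).ncard
          ≤ (Set.univ : Set (Fin 3 × ZMod n)).ncard := hle
        _ = 3 * n := by
            rw [Set.ncard_univ, Nat.card_eq_fintype_card, Fintype.card_prod, Fintype.card_fin,
              ZMod.card]
    · rintro ⟨i, j⟩ hj ⟨i', j'⟩ hj' heq
      simp only [Set.mem_setOf_eq] at hj hj'
      simp only [Prod.mk.injEq, Fin.mk.injEq] at heq
      obtain ⟨h1, h2⟩ := heq
      rw [Nat.mod_eq_of_lt hj, Nat.mod_eq_of_lt hj'] at h1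
      exact Prod.ext (Fin.ext h1) h2
  calc (S0 m n).ncard ≤ ({v : Fin m × ZMod n | v.2.val % 3 = 0}).ncard
        + ({v : Fin m × ZMod n | v.1.val < 3}).ncard := by
        rw [hsplit]; exact Set.ncard_union_le _ _
    _ ≤ m * ((n+2)/3) + 3 * n := Nat.add_le_add hA hB

lemma sid_lower {m n : ℕ} (hm : 3 ≤ m) (hn : 5 ≤ n) (S : Set (Fin m × ZMod n))
    (hS : IsSID (KmCn m n) S) : n * m ≤ 3 * S.ncard + n := by
  classical
  haveI : NeZero n := ⟨by omega⟩
  set s : ZMod n → ℕ := fun j => (Finset.univ.filter (fun i : Fin m => (i, j) ∈ S)).card with hs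
  have hF : S.Finite := Set.toFinite S
  have hsum : ∑ j : ZMod n, s j = S.ncard := by
    rw [Set.ncard_eq_toFinset_card S hF,
      Finset.card_eq_sum_card_fiberwise (f := Prod.snd) (t := Finset.univ)
        (fun x _ => Finset.mem_univ _)]
    refine (Finset.sum_congr rfl ?_).symm
    intro j _
    refine Finset.card_bij
      (fun (v : Fin m × ZMod n) (_ : v ∈ hF.toFinset.filter (fun w => w.2 = j)) => v.1) ?_ ?_ ?_
    · rintro ⟨x, y⟩ hv
      simp only [Finset.mem_filter, Set.Finite.mem_toFinset] at hv
      simp only [Finset.mem_filter, Finset.mem_univ, true_and]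
      obtain ⟨h1, h2⟩ := hv
      subst h2; exact h1
    · rintro ⟨x, y⟩ hv ⟨x', y'⟩ hv' h
      simp only [Finset.mem_filter, Set.Finite.mem_toFinset] at hv hv'
      simp only at h
      exact Prod.ext h (hv.2.trans hv'.2.symm)
    · intro i hi
      simp only [Finset.mem_filter, Finset.mem_univ, true_and] at hi
      exact ⟨(i, j), by simp [Set.Finite.mem_toFinset]; exact hi, rfl⟩
  have key : ∀ j : ZMod n, m ≤ s (j-1) + s j + s (j+1) + 1 := by
    intro j
    by_contra hcon
    push_neg at hcon
    have hBle : (Finset.univ.filter (fun i : Fin m => (i, j-1) ∈ S ∨ (i, j+1) ∈ S)).card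
        ≤ s (j-1) + s (j+1) := by
      calc (Finset.univ.filter (fun i : Fin m => (i, j-1) ∈ S ∨ (i, j+1) ∈ S)).card
          ≤ ((Finset.univ.filter (fun i : Fin m => (i, j-1) ∈ S))
            ∪ (Finset.univ.filter (fun i : Fin m => (i, j+1) ∈ S))).card := by
            apply Finset.card_le_card
            intro i hi
            simp only [Finset.mem_filter, Finset.mem_union, Finset.mem_univ, true_and] at hi ⊢
            exact hi
        _ ≤ _ := Finset.card_union_le _ _
    set B := Finset.univ.filter (fun i : Fin m => (i, j-1) ∈ S ∨ (i, j+1) ∈ S) with hB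
    set A := Finset.univ.filter (fun i : Fin m => (i, j) ∈ S) with hA
    have hAcard : A.card = s j := rfl
    have hAc : 2 ≤ (Finset.univ \ A).card := by
      rw [Finset.card_sdiff_of_subset (Finset.subset_univ _), Finset.card_univ, Fintype.card_fin]
      omega
    have hBc : 1 ≤ (Finset.univ \ B).card := by
      rw [Finset.card_sdiff_of_subset (Finset.subset_univ _), Finset.card_univ, Fintype.card_fin]
      omega
    obtain ⟨i', hi'⟩ := Finset.card_pos.1 (by omega : 0 < (Finset.univ \ B).card)
    have herase : 0 < ((Finset.univ \ A).erase i').card := by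
      have := Finset.pred_card_le_card_erase (a := i') (s := Finset.univ \ A)
      omega
    obtain ⟨i, hi⟩ := Finset.card_pos.1 herase
    rw [Finset.mem_erase] at hi
    obtain ⟨hii', hiA⟩ := hi
    rw [Finset.mem_sdiff, hA, Finset.mem_filter] at hiA
    rw [Finset.mem_sdiff, hB, Finset.mem_filter] at hi'
    have hiS : (i, j) ∉ S := fun h => hiA.2 ⟨Finset.mem_univ _, h⟩
    have hi'S : ¬((i', j-1) ∈ S ∨ (i', j+1) ∈ S) := fun h => hi'.2 ⟨Finset.mem_univ _, h⟩
    -- use SID property at v = (i,j), u = (i',j)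
    have hsep := (hS.2 (i, j)).2
    have hne : ((i', j) : Fin m × ZMod n) ∉ ({(i, j)} : Set (Fin m × ZMod n)) := by
      simp only [Set.mem_singleton_iff, Prod.mk.injEq]
      exact fun h => hii' h.1.symm
    rw [← hsep] at hne
    simp only [Set.mem_iInter, Set.mem_inter_iff, and_imp, not_forall] at hne
    obtain ⟨c, hc1, hc2, hc3⟩ := hne
    rcases (mem_cNbr c (i, j)).1 hc1 with rfl | ⟨hcr, hcol⟩
    · exact hiS hc2
    · by_cases hci : c.1 = i'
      · apply hi'S
        rcases hcol with h | h
        · right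
          have : c = (i', j + 1) := Prod.ext hci h.symm
          rwa [this] at hc2
        · left
          have : c = (i', j - 1) := Prod.ext hci (by linear_combination h)
          rwa [this] at hc2
      · apply hc3
        rw [mem_cNbr]
        right
        refine ⟨fun h => hci h.symm, ?_⟩
        rcases hcol with h | h
        · right; exact (by linear_combination h : (j : ZMod n) + 1 = c.2) ▸ rfl
        · left; exact h
  have hsum2 : ∑ _j : ZMod n, (m : ℕ) ≤ ∑ j : ZMod n, (s (j-1) + s j + s (j+1) + 1) :=
    Finset.sum_le_sum (fun j _ => key j)
  have e1 : ∑ j : ZMod n, s (j - 1) = ∑ j : ZMod n, s j := by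
    apply Fintype.sum_equiv (Equiv.subRight (1 : ZMod n))
    intro j
    simp [Equiv.subRight]
  have e2 : ∑ j : ZMod n, s (j + 1) = ∑ j : ZMod n, s j := by
    apply Fintype.sum_equiv (Equiv.addRight (1 : ZMod n))
    intro j
    simp [Equiv.addRight]
  have hcard : (Finset.univ : Finset (ZMod n)).card = n := by
    rw [Finset.card_univ, ZMod.card]
  rw [Finset.sum_const, hcard, smul_eq_mul] at hsum2
  have hrhs : ∑ j : ZMod n, (s (j-1) + s j + s (j+1) + 1) = 3 * S.ncard + n := by
    rw [Finset.sum_add_distrib, Finset.sum_add_distrib, Finset.sum_add_distrib, e1, e2, hsum,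
      Finset.sum_const, hcard, smul_eq_mul, mul_one]
    ring
  omega

lemma gamma_le {m n : ℕ} (hm : 3 ≤ m) (hn : 5 ≤ n) :
    gammaSID (KmCn m n) ≤ m * ((n+2)/3) + 3 * n :=
  le_trans (Nat.sInf_le ⟨S0 m n, isSID_S0 hm hn, rfl⟩) (ncard_S0_le hn)

lemma gamma_ge {m n : ℕ} (hm : 3 ≤ m) (hn : 5 ≤ n) :
    n * m ≤ 3 * gammaSID (KmCn m n) + n := by
  have hne : {k | ∃ S : Set (Fin m × ZMod n), IsSID (KmCn m n) S ∧ S.ncard = k}.Nonempty :=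
    ⟨(S0 m n).ncard, S0 m n, isSID_S0 hm hn, rfl⟩
  obtain ⟨S, hS, hcard⟩ := Nat.sInf_mem hne
  rw [gammaSID, ← hcard]
  exact sid_lower hm hn S hS

theorem stmt18 :
    ∀ ε : ℝ, 0 < ε → ∃ M N : ℕ, ∀ m n : ℕ, M ≤ m → N ≤ n →
      |(gammaSID (KmCn m n) : ℝ) / (m * n) - 1 / 3| < ε := by
  intro ε hε
  refine ⟨max 5 (⌈6/ε⌉₊ + 1), max 5 (⌈6/ε⌉₊ + 1), ?_⟩
  intro m n hmM hnN
  rw [max_le_iff] at hmM hnN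
  obtain ⟨hm5, hmc⟩ := hmM
  obtain ⟨hn5, hnc⟩ := hnN
  have hm0 : (0:ℝ) < m := by exact_mod_cast (by omega : 0 < m)
  have hn0 : (0:ℝ) < n := by exact_mod_cast (by omega : 0 < n)
  have hm5r : (5:ℝ) ≤ m := by exact_mod_cast hm5
  have hn5r : (5:ℝ) ≤ n := by exact_mod_cast hn5
  have hceil : (6/ε : ℝ) < (⌈6/ε⌉₊ + 1 : ℕ) := by
    push_cast
    exact lt_of_le_of_lt (Nat.le_ceil _) (by linarith)
  have hmr : (6/ε : ℝ) < m := lt_of_lt_of_le hceil (by exact_mod_cast hmc)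
  have hnr : (6/ε : ℝ) < n := lt_of_lt_of_le hceil (by exact_mod_cast hnc)
  have hεm : 6 < ε * m := by rw [div_lt_iff₀ hε] at hmr; linarith
  have hεn : 6 < ε * n := by rw [div_lt_iff₀ hε] at hnr; linarith
  set g := (gammaSID (KmCn m n) : ℝ) with hg
  have hub : g ≤ (m * (n+2))/3 + 3*n := by
    have h1 := gamma_le (m := m) (n := n) (by omega) (by omega)
    have h2 : (gammaSID (KmCn m n) : ℝ) ≤ ((m * ((n+2)/3) + 3*n : ℕ) : ℝ) := by exact_mod_cast h1
    have h3 : (((n+2)/3 : ℕ) : ℝ) ≤ ((n:ℝ)+2)/3 := by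
      have := Nat.cast_div_le (α := ℝ) (m := n+2) (n := 3)
      push_cast at this ⊢
      linarith
    push_cast at h2
    nlinarith [h2, h3, hm0]
  have hlb : (n:ℝ) * m ≤ 3 * g + n := by
    have h1 := gamma_ge (m := m) (n := n) (by omega) (by omega)
    rw [hg]
    exact_mod_cast h1
  have hmn : (0:ℝ) < (m:ℝ) * n := mul_pos hm0 hn0
  have hA : 6 * (m:ℝ) < ε * n * m := by nlinarith
  have hB : 6 * (n:ℝ) < ε * m * n := by nlinarith
  have key1 : g < (1/3 + ε) * ((m:ℝ) * n) := by nlinarith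
  have key2 : (1/3 - ε) * ((m:ℝ) * n) < g := by nlinarith
  rw [abs_lt]
  constructor
  · have := (lt_div_iff₀ hmn).2 key2
    linarith
  · have := (div_lt_iff₀ hmn).2 key1
    linarith
end
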